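/- arXiv:1212.6093 — 3 statements merged into one kernel-verified Lean document; each statement's English description precedes it below -/
import Mathlib

section
/- Let k ≥ 1 and let G be a nonempty k-degenerate simple graph. Then there exists a vertex u of G that is adjacent to at most k vertices of degree more than k. -/
/-- `G` is `k`-degenerate: every nonempty (induced) subgraph has a vertex of degree at most `k`. -/
def SimpleGraph.Degenerate {V : Type*} (k : ℕ) (G : SimpleGraph V) : Prop :=
  ∀ s : Set V, s.Nonempty → ∃ v ∈ s, (s ∩ {w | G.Adj v w}).ncard ≤ k

/-- Two edges (as unordered pairs) share an endpoint. -/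
def Sym2.ShareEndpoint {V : Type*} (e f : Sym2 V) : Prop := ∃ v, v ∈ e ∧ v ∈ f

/-- Two edges are within distance one: they share an endpoint, or some edge of `G`
shares an endpoint with both. -/
def SimpleGraph.WithinDistOne {V : Type*} (G : SimpleGraph V) (e f : Sym2 V) : Prop :=
  Sym2.ShareEndpoint e f ∨ ∃ g ∈ G.edgeSet, Sym2.ShareEndpoint e g ∧ Sym2.ShareEndpoint g f

/-- `G` admits a strong edge-coloring with `n` colors: distinct edges within distance one
receive different colors. -/
def SimpleGraph.StrongEdgeColorable {V : Type*} (G : SimpleGraph V) (n : ℕ) : Prop :=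
  ∃ c : G.edgeSet → Fin n, ∀ e f : G.edgeSet, e ≠ f → G.WithinDistOne e.1 f.1 → c e ≠ c f

/-- The strong chromatic index of `G`. -/
noncomputable def SimpleGraph.strongChromaticIndex {V : Type*} (G : SimpleGraph V) : ℕ :=
  sInf {n | G.StrongEdgeColorable n}

/-- A nonempty `k`-degenerate graph (`k ≥ 1`) has a vertex adjacent to at most `k`
vertices of degree more than `k`. -/
theorem exists_special_vertex {V : Type*} [Fintype V] [DecidableEq V] [Nonempty V]
    (k : ℕ) (hk : 1 ≤ k) (G : SimpleGraph V) [DecidableRel G.Adj]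
    (hdeg : G.Degenerate k) :
    ∃ u : V, (Finset.univ.filter fun v => G.Adj u v ∧ k < G.degree v).card ≤ k := by
  classical
  set S : Set V := {v | k < G.degree v} with hS
  by_cases h : S.Nonempty
  · obtain ⟨v, hv, hcard⟩ := hdeg S h
    refine ⟨v, ?_⟩
    have heq : (Finset.univ.filter fun w => G.Adj v w ∧ k < G.degree w) =
        (S ∩ {w | G.Adj v w}).toFinset := by
      ext w
      simp [hS, and_comm]
    rw [heq]
    rwa [Set.ncard_eq_toFinset_card'] at hcard
  · refine ⟨Classical.arbitrary V, ?_⟩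
    have heq : (Finset.univ.filter fun w => G.Adj (Classical.arbitrary V) w ∧ k < G.degree w)
        = ∅ := by
      ext w
      simp only [Finset.mem_filter, Finset.notMem_empty, iff_false]
      push_neg
      exact fun _ _ => le_of_not_gt fun hw => h ⟨w, hw⟩
    simp [heq]
end

section
/- Let k ≥ 1 and let G be a k-degenerate simple graph with at least one edge. Then G contains a special edge, i.e., an edge uv such that u is adjacent to at most k vertices of degree more than k, and the degree of v is at most k. -/
/-- A `k`-degenerate graph (`k ≥ 1`) with at least one edge has a special edge: an edge
`uv` where `u` is adjacent to at most `k` vertices of degree more than `k`, and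
`v` has degree at most `k`. -/
theorem exists_special_edge {V : Type*} [Fintype V] [DecidableEq V]
    (k : ℕ) (hk : 1 ≤ k) (G : SimpleGraph V) [DecidableRel G.Adj]
    (hdeg : G.Degenerate k) (he : G.edgeSet.Nonempty) :
    ∃ u v : V, G.Adj u v ∧
      (Finset.univ.filter fun w => G.Adj u w ∧ k < G.degree w).card ≤ k ∧
      G.degree v ≤ k := by
  classical
  set B : Set V := {v | k < G.degree v} with hB
  by_cases hBne : B.Nonempty
  · obtain ⟨v, hvB, hvcard⟩ := hdeg B hBne
    have hdv : k < G.degree v := hvB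
    have hfin : (Finset.univ.filter fun w => G.Adj v w ∧ k < G.degree w).card ≤ k := by
      have heq : (B ∩ {w | G.Adj v w}) =
          ↑(Finset.univ.filter fun w => G.Adj v w ∧ k < G.degree w) := by
        ext w; simp [hB, and_comm]
      rw [heq, Set.ncard_coe_finset] at hvcard
      exact hvcard
    have hex : ∃ w, G.Adj v w ∧ G.degree w ≤ k := by
      by_contra h
      push_neg at h
      have hle : G.degree v ≤
          (Finset.univ.filter fun w => G.Adj v w ∧ k < G.degree w).card := by
        rw [SimpleGraph.degree]
        apply Finset.card_le_card
        intro w hw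
        rw [SimpleGraph.mem_neighborFinset] at hw
        simp only [Finset.mem_filter, Finset.mem_univ, true_and]
        exact ⟨hw, h w hw⟩
      omega
    obtain ⟨w, hvw, hwk⟩ := hex
    exact ⟨v, w, hvw, hfin, hwk⟩
  · rw [Set.not_nonempty_iff_eq_empty] at hBne
    have hall : ∀ w, G.degree w ≤ k := by
      intro w
      by_contra h
      push_neg at h
      have : w ∈ B := h
      rw [hBne] at this
      exact this
    have hadj : ∃ u v : V, G.Adj u v := by
      obtain ⟨e, heE⟩ := he
      revert heE
      refine e.ind ?_
      intro u v h
      exact ⟨u, v, h⟩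
    obtain ⟨u, v, huv⟩ := hadj
    refine ⟨u, v, huv, ?_, hall v⟩
    have : (Finset.univ.filter fun w => G.Adj u w ∧ k < G.degree w) = ∅ := by
      apply Finset.filter_eq_empty_iff.mpr
      intro w _
      rintro ⟨-, hlt⟩
      exact absurd hlt (not_lt.mpr (hall w))
    simp [this]
end

section
/- Let k ≥ 1 and let G be a k-degenerate simple graph with edge set of size m. Then the edges of G can be ordered as e_1, e_2, …, e_m so that for each i, the edge e_i is a special edge of the subgraph G_i of G induced by the edge set {e_1, …, e_i}; that is, writing e_i = u_i v_i, the vertex u_i is adjacent in G_i to at most k vertices whose degree in G_i is more than k, and the degree of v_i in G_i is at most k. -/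
open Function Set

theorem Set.exists_injective_range_eq_forall_image_Iic {α : Type*} (P : Set α → α → Prop)
    {m : ℕ} {E : Set α} (hE : E.Finite) (hm : E.ncard = m)
    (hP : ∀ S ⊆ E, S.Nonempty → ∃ x ∈ S, P S x) :
    ∃ e : Fin m → α, Injective e ∧ range e = E ∧ ∀ i, P (e '' Iic i) (e i) := by
  induction m generalizing E with
  | zero =>
    refine ⟨Fin.elim0, fun i ↦ i.elim0, ?_, fun i ↦ i.elim0⟩
    rw [range_eq_empty, ((ncard_eq_zero hE).1 hm)]
  | succ m ih =>
    obtain ⟨x, hxE, hx⟩ := hP E subset_rfl (nonempty_of_ncard_ne_zero (by omega))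
    obtain ⟨e, he, hrange, hprefix⟩ := ih (E := E \ {x}) hE.sdiff
      (by rw [ncard_sdiff_singleton_of_mem hxE, hm, Nat.add_sub_cancel])
      (fun S hS ↦ hP S (hS.trans sdiff_subset))
    refine ⟨Fin.snoc e x, Fin.snoc_injective_of_injective he (by simp [hrange]), ?_, ?_⟩
    · rw [Fin.range_snoc, hrange, insert_sdiff_singleton, insert_eq_of_mem hxE]
    · intro i
      induction i using Fin.lastCases with
      | last =>
        have hIic : Iic (Fin.last m) = univ := eq_univ_of_forall Fin.le_last
        rwa [hIic, image_univ, Fin.range_snoc, hrange, insert_sdiff_singleton,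
          insert_eq_of_mem hxE, Fin.snoc_last]
      | cast i =>
        rw [← Fin.image_castSucc_Iic, image_image, Fin.snoc_castSucc]
        simpa only [Fin.snoc_castSucc] using hprefix i

namespace SimpleGraph

variable {V : Type*} (k : ℕ) (H : SimpleGraph V)

def IsSpecialVertex (u : V) : Prop :=
  {w | H.Adj u w ∧ k < (H.neighborSet w).ncard}.ncard ≤ k

def IsSpecialEdge (u v : V) : Prop :=
  H.IsSpecialVertex k u ∧ (H.neighborSet v).ncard ≤ k

variable {k H}

theorem Degenerate.anti [Finite V] {G : SimpleGraph V} (h : H ≤ G) (hG : G.Degenerate k) :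
    H.Degenerate k := by
  intro s hs
  obtain ⟨v, hv, hcard⟩ := hG s hs
  exact ⟨v, hv, (ncard_le_ncard (inter_subset_inter_right _ fun _ ↦ @h v _) (toFinite _)).trans
    hcard⟩

theorem Degenerate.exists_isSpecialEdge (hH : H.Degenerate k) (hne : H.edgeSet.Nonempty) :
    ∃ u v, H.Adj u v ∧ H.IsSpecialEdge k u v := by
  set B : Set V := {w | k < (H.neighborSet w).ncard}
  have hspecial : ∀ u, H.IsSpecialVertex k u ↔ (B ∩ H.neighborSet u).ncard ≤ k := fun u ↦ by
    rw [IsSpecialVertex, inter_comm]; rfl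
  rcases B.eq_empty_or_nonempty with hB | hB
  · obtain ⟨e, he⟩ := hne
    induction e using Sym2.ind with | _ u v => ?_
    have hvB : v ∉ B := hB ▸ notMem_empty v
    exact ⟨u, v, he, (hspecial u).2 (by simp [hB]), not_lt.1 hvB⟩
  · obtain ⟨u, huB, hu⟩ := hH B hB
    have hu : (B ∩ H.neighborSet u).ncard ≤ k := hu
    obtain ⟨v, huv, hvB⟩ : ∃ v ∈ H.neighborSet u, v ∉ B := by
      by_contra! hsub
      rw [inter_eq_right.2 hsub] at hu
      exact (not_lt.2 hu) huB
    exact ⟨u, v, huv, (hspecial u).2 hu, not_lt.1 hvB⟩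

theorem edgeSet_fromEdgeSet_of_subset {G : SimpleGraph V} {S : Set (Sym2 V)}
    (hS : S ⊆ G.edgeSet) : (fromEdgeSet S).edgeSet = S := by
  rw [edgeSet_fromEdgeSet, sdiff_eq_left, ← subset_compl_iff_disjoint_right]
  exact hS.trans G.edgeSet_subset_compl_diagSet

theorem Degenerate.exists_isSpecialEdge_fromEdgeSet [Finite V] {G : SimpleGraph V}
    (hG : G.Degenerate k) {S : Set (Sym2 V)} (hS : S ⊆ G.edgeSet) (hne : S.Nonempty) :
    ∃ f ∈ S, ∃ u v, f = s(u, v) ∧ (fromEdgeSet S).IsSpecialEdge k u v := by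
  have hSedges := edgeSet_fromEdgeSet_of_subset hS
  have hle : fromEdgeSet S ≤ G := (fromEdgeSet_mono hS).trans (fromEdgeSet_edgeSet G).le
  obtain ⟨u, v, huv, hspecial⟩ := (hG.anti hle).exists_isSpecialEdge (by rwa [hSedges])
  exact ⟨s(u, v), hSedges ▸ huv, u, v, rfl, hspecial⟩

end SimpleGraph

theorem exists_special_edge_order_general {V : Type*} [Fintype V]
    (k : ℕ) (G : SimpleGraph V) [DecidableRel G.Adj]
    (hdeg : G.Degenerate k) (m : ℕ) (hm : G.edgeFinset.card = m) :
    ∃ e : Fin m → Sym2 V, Function.Injective e ∧ (∀ j, e j ∈ G.edgeSet) ∧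
      (∀ f ∈ G.edgeSet, ∃ j, e j = f) ∧
      ∀ i : Fin m, ∃ u v : V, e i = s(u, v) ∧
        ({w | (SimpleGraph.fromEdgeSet (e '' {j | j ≤ i})).Adj u w ∧
            k < ((SimpleGraph.fromEdgeSet (e '' {j | j ≤ i})).neighborSet w).ncard}).ncard
          ≤ k ∧
        ((SimpleGraph.fromEdgeSet (e '' {j | j ≤ i})).neighborSet v).ncard ≤ k := by
  have hcard : G.edgeSet.ncard = m := by rw [← hm, ← SimpleGraph.coe_edgeFinset, ncard_coe_finset]
  obtain ⟨e, he, hrange, hspecial⟩ := Set.exists_injective_range_eq_forall_image_Iic _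
    G.edgeSet.toFinite hcard fun _ ↦ hdeg.exists_isSpecialEdge_fromEdgeSet
  exact ⟨e, he, fun j ↦ hrange ▸ mem_range_self j, fun f hf ↦ (hrange ▸ hf : f ∈ range e),
    hspecial⟩

/-- The edges of a `k`-degenerate graph (`k ≥ 1`) can be ordered `e 0, …, e (m-1)` so that
each `e i = uv` is a special edge of the subgraph `G i` induced by the edge set
`{e j | j ≤ i}`: `u` is adjacent in `G i` to at most `k` vertices whose degree in `G i`
exceeds `k`, and `v` has degree at most `k` in `G i`. -/
theorem exists_special_edge_order {V : Type*} [Fintype V] [DecidableEq V]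
    (k : ℕ) (hk : 1 ≤ k) (G : SimpleGraph V) [DecidableRel G.Adj]
    (hdeg : G.Degenerate k) (m : ℕ) (hm : G.edgeFinset.card = m) :
    ∃ e : Fin m → Sym2 V, Function.Injective e ∧ (∀ j, e j ∈ G.edgeSet) ∧
      (∀ f ∈ G.edgeSet, ∃ j, e j = f) ∧
      ∀ i : Fin m, ∃ u v : V, e i = s(u, v) ∧
        ({w | (SimpleGraph.fromEdgeSet (e '' {j | j ≤ i})).Adj u w ∧
            k < ((SimpleGraph.fromEdgeSet (e '' {j | j ≤ i})).neighborSet w).ncard}).ncard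
          ≤ k ∧
        ((SimpleGraph.fromEdgeSet (e '' {j | j ≤ i})).neighborSet v).ncard ≤ k :=
  exists_special_edge_order_general k G hdeg m hm
end
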